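/- arXiv:2502.15650 — 6 statements merged into one kernel-verified Lean document; each statement's English description precedes it below -/
import Mathlib

section
/- Let F be a finite prime field and f : F^n → F a function. Then f has global degree at most d (i.e., f is computed by a polynomial of total degree ≤ d in n variables) if and only if for all a₁,...,a_{d+1}, x ∈ F^n, the iterated finite difference D_{a_{d+1}}...D_{a_1} f(x) = 0, where D_a f(x) := f(x+a) − f(x). -/
/-- Discrete derivative of `f` in direction `a`: `D_a f (x) = f (x + a) - f x`. -/
def discDeriv {n q : ℕ} (a : Fin n → ZMod q) (f : (Fin n → ZMod q) → ZMod q) :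
    (Fin n → ZMod q) → ZMod q := fun x => f (x + a) - f x

/-- Iterated discrete derivative `D_{a_k} ⋯ D_{a_1} f`. -/
def iterDeriv {n q : ℕ} : (k : ℕ) → (Fin k → (Fin n → ZMod q)) →
    ((Fin n → ZMod q) → ZMod q) → ((Fin n → ZMod q) → ZMod q)
  | 0, _, f => f
  | (k + 1), a, f => discDeriv (a (Fin.last k)) (iterDeriv k (fun i => a i.castSucc) f)

/-!
If `P` has total degree `≤ m + 1` then `P(X + a) - P` has total degree `≤ m`, and differences of
constants vanish; this gives the forward direction.

Conversely, let `g_s(x) = ∏ᵢ (xᵢ)_{sᵢ}` with the falling factorials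
`(t)_k = t (t - 1) ⋯ (t - k + 1)`. The difference in a coordinate direction `eᵢ` sends `g_s` to
`sᵢ • g_{s - eᵢ}`, so taking `tᵢ` differences in each direction `eᵢ` and evaluating at `0` sends
`∑ c_s g_s` to `(∏ᵢ tᵢ!) c_t`, and `tᵢ! ≠ 0` in `F` when `tᵢ < q`. Hence the `qⁿ` functions `g_s`
with all `sᵢ < q` are linearly independent, so they form a basis of all functions `Fⁿ → F`; and if
every difference of order `d + 1` of `f` vanishes, `f` only involves the `g_s` with `∑ sᵢ ≤ d`,
which have degree `∑ sᵢ`.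
-/

open MvPolynomial fwdDiff

namespace MvPolynomial

variable {σ R : Type*} [CommRing R]

lemma totalDegree_toMvPolynomial_le (p : Polynomial R) (i : σ) :
    (p.toMvPolynomial i).totalDegree ≤ p.natDegree := by
  conv_lhs => rw [p.as_sum_range_C_mul_X_pow]
  simp only [map_sum, map_mul, Polynomial.toMvPolynomial_C, map_pow, Polynomial.toMvPolynomial_X]
  refine totalDegree_finsetSum_le fun k hk => ?_
  rw [C_mul_X_pow_eq_monomial]
  exact (totalDegree_monomial_le _ _).trans (by simpa [Nat.lt_succ_iff] using hk)

noncomputable def fwdDiffPoly (a : σ → R) : MvPolynomial σ R →ₗ[R] MvPolynomial σ R :=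
  (bind₁ fun i => X i + C (a i)).toLinearMap - LinearMap.id

lemma fwdDiffPoly_apply (a : σ → R) (P : MvPolynomial σ R) :
    fwdDiffPoly a P = bind₁ (fun i => X i + C (a i)) P - P := rfl

lemma eval_fwdDiffPoly (a x : σ → R) (P : MvPolynomial σ R) :
    eval x (fwdDiffPoly a P) = Δ_[a] (fun y => eval y P) x := by
  have hshift : eval x (bind₁ (fun i => X i + C (a i)) P) = eval (x + a) P := by
    induction P using MvPolynomial.induction_on <;> simp_all
  rw [fwdDiffPoly_apply, map_sub, hshift]
  rfl

lemma fwdDiffPoly_C (a : σ → R) (c : R) : fwdDiffPoly a (C c) = 0 := by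
  simp [fwdDiffPoly_apply]

lemma fwdDiffPoly_mul_X (a : σ → R) (p : MvPolynomial σ R) (i : σ) :
    fwdDiffPoly a (p * X i) = fwdDiffPoly a p * (X i + C (a i)) + p * C (a i) := by
  simp only [fwdDiffPoly_apply, map_mul, bind₁_X_right]
  ring

variable [IsDomain R]

lemma totalDegree_fwdDiffPoly_monomial_lt_or_eq_zero (a : σ → R) (s : σ →₀ ℕ) (c : R) :
    (fwdDiffPoly a (monomial s c)).totalDegree < (monomial s c).totalDegree ∨
      fwdDiffPoly a (monomial s c) = 0 := by
  refine induction_on_monomial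
    (motive := fun p => (fwdDiffPoly a p).totalDegree < p.totalDegree ∨ fwdDiffPoly a p = 0)
    (fun c => Or.inr (fwdDiffPoly_C a c)) (fun p i ih => ?_) s c
  rcases eq_or_ne p 0 with rfl | hp
  · simp
  have hdeg : (p * X i).totalDegree = p.totalDegree + 1 := by
    rw [totalDegree_mul_of_isDomain hp (X_ne_zero i), totalDegree_X]
  have hlin : (X i + C (a i)).totalDegree ≤ 1 :=
    (totalDegree_add _ _).trans (by simp [totalDegree_X])
  refine Or.inl ?_
  rw [fwdDiffPoly_mul_X, hdeg]
  refine (totalDegree_add _ _).trans_lt (max_lt ?_ ?_)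
  · rcases ih with h | h
    · exact (totalDegree_mul _ _).trans_lt (by omega)
    · simp [h]
  · exact (totalDegree_mul _ _).trans_lt (by simp)

lemma totalDegree_fwdDiffPoly_le (a : σ → R) {P : MvPolynomial σ R} {m : ℕ}
    (hP : P.totalDegree ≤ m + 1) : (fwdDiffPoly a P).totalDegree ≤ m := by
  rw [P.as_sum, map_sum]
  refine totalDegree_finsetSum_le fun s hs => ?_
  have hs' : (monomial s (coeff s P)).totalDegree ≤ m + 1 :=
    (totalDegree_monomial_le _ _).trans ((le_totalDegree hs).trans hP)
  rcases totalDegree_fwdDiffPoly_monomial_lt_or_eq_zero a s (coeff s P) with h | h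
  · omega
  · simp [h]

variable (σ) (K : Type*) [CommRing K]

noncomputable def degreeLEFunctions (d : ℕ) : Submodule K ((σ → K) → K) :=
  (restrictTotalDegree σ K d).map (evalₗ K σ)

variable {σ K}

lemma mem_degreeLEFunctions {d : ℕ} {f : (σ → K) → K} :
    f ∈ degreeLEFunctions σ K d ↔
      ∃ P : MvPolynomial σ K, P.totalDegree ≤ d ∧ ∀ x, eval x P = f x := by
  simp only [degreeLEFunctions, Submodule.mem_map, mem_restrictTotalDegree, _root_.funext_iff,
    evalₗ_apply]

lemma degreeLEFunctions_mono : Monotone (degreeLEFunctions σ K) := by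
  intro d e hde f hf
  obtain ⟨P, hP, hPf⟩ := mem_degreeLEFunctions.mp hf
  exact mem_degreeLEFunctions.mpr ⟨P, hP.trans hde, hPf⟩

lemma fwdDiff_eq_zero_of_mem_degreeLEFunctions_zero (a : σ → K) {f : (σ → K) → K}
    (hf : f ∈ degreeLEFunctions σ K 0) : Δ_[a] f = 0 := by
  obtain ⟨P, hP, hPf⟩ := mem_degreeLEFunctions.mp hf
  obtain ⟨c, rfl⟩ : ∃ c, P = C c := ⟨_, totalDegree_eq_zero_iff_eq_C.mp (Nat.le_zero.mp hP)⟩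
  funext x
  simp [fwdDiff, ← hPf]

lemma fwdDiff_mem_degreeLEFunctions [IsDomain K] (a : σ → K) {m : ℕ} {f : (σ → K) → K}
    (hf : f ∈ degreeLEFunctions σ K (m + 1)) : Δ_[a] f ∈ degreeLEFunctions σ K m := by
  obtain ⟨P, hP, hPf⟩ := mem_degreeLEFunctions.mp hf
  refine mem_degreeLEFunctions.mpr ⟨fwdDiffPoly a P, totalDegree_fwdDiffPoly_le a hP, fun x => ?_⟩
  simp only [eval_fwdDiffPoly, hPf]

end MvPolynomial

section descPochhammer

variable {σ R : Type*} [CommRing R]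

lemma descPochhammer_eval_add_one_sub_eval (k : ℕ) (t : R) :
    (descPochhammer R k).eval (t + 1) - (descPochhammer R k).eval t =
      k * (descPochhammer R (k - 1)).eval t := by
  cases k with
  | zero => simp
  | succ k =>
    rw [descPochhammer_succ_eval _ t, descPochhammer_succ_left]
    simp only [Polynomial.eval_mul, Polynomial.eval_X, Polynomial.eval_comp, Polynomial.eval_sub,
      Polynomial.eval_one, add_sub_cancel_right, Nat.add_sub_cancel]
    push_cast
    ring

variable [Fintype σ]

noncomputable def prodDescPochhammer (s : σ → ℕ) (x : σ → R) : R :=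
  ∏ i, (descPochhammer R (s i)).eval (x i)

lemma prodDescPochhammer_mem_degreeLEFunctions [IsDomain R] (s : σ → ℕ) :
    prodDescPochhammer s ∈ degreeLEFunctions σ R (∑ i, s i) := by
  refine mem_degreeLEFunctions.mpr
    ⟨∏ i, (descPochhammer R (s i)).toMvPolynomial i, ?_, fun x => ?_⟩
  · refine (totalDegree_finsetProd _ _).trans (Finset.sum_le_sum fun i _ => ?_)
    simpa using totalDegree_toMvPolynomial_le (descPochhammer R (s i)) i
  · simp [prodDescPochhammer, eval_toMvPolynomial]

lemma descFactorial_mul_prodDescPochhammer_sub_zero (s t : σ → ℕ) :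
    (∏ i, ((s i).descFactorial (t i) : R)) * prodDescPochhammer (s - t) 0 =
      if s = t then ∏ i, ((t i).factorial : R) else 0 := by
  have key : ∀ i, ((s i).descFactorial (t i) : R) * (descPochhammer R (s i - t i)).eval 0 =
      if s i = t i then ((t i).factorial : R) else 0 := by
    intro i
    rw [descPochhammer_eval_zero]
    rcases lt_trichotomy (s i) (t i) with h | h | h
    · simp [Nat.descFactorial_eq_zero_iff_lt.mpr h, h.ne]
    · simp [h, Nat.descFactorial_self]
    · simp [h.ne', Nat.sub_ne_zero_of_lt h]
  simp only [prodDescPochhammer, Pi.sub_apply, Pi.zero_apply, ← Finset.prod_mul_distrib, key,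
    Finset.prod_ite_zero, Finset.mem_univ, true_implies]
  simp [funext_iff]

variable [DecidableEq σ]

lemma fwdDiff_single_prodDescPochhammer (s : σ → ℕ) (i : σ) :
    Δ_[Pi.single i 1] (prodDescPochhammer (R := R) s) =
      (s i : R) • prodDescPochhammer (s - Pi.single i 1) := by
  funext x
  have hoff : ∀ j ∈ ({i}ᶜ : Finset σ),
      (x + Pi.single i 1 : σ → R) j = x j ∧ (s - Pi.single i 1 : σ → ℕ) j = s j := by
    intro j hj
    have hji : j ≠ i := by simpa using hj
    simp [hji]
  simp only [fwdDiff, prodDescPochhammer, Pi.smul_apply, smul_eq_mul]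
  rw [Fintype.prod_eq_mul_prod_compl i, Fintype.prod_eq_mul_prod_compl i,
    Fintype.prod_eq_mul_prod_compl i,
    Finset.prod_congr rfl fun j hj => congrArg (Polynomial.eval · _) (hoff j hj).1,
    Finset.prod_congr rfl fun j hj =>
      congrArg (fun k => (descPochhammer R k).eval (x j)) (hoff j hj).2]
  simp only [Pi.add_apply, Pi.single_eq_same, Pi.sub_apply, ← sub_mul,
    descPochhammer_eval_add_one_sub_eval]
  ring

lemma fwdDiff_single_iterate_prodDescPochhammer (s : σ → ℕ) (i : σ) (b : ℕ) :
    (Δ_[Pi.single i 1])^[b] (prodDescPochhammer (R := R) s) =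
      ((s i).descFactorial b : R) • prodDescPochhammer (s - Pi.single i b) := by
  induction b with
  | zero => simp
  | succ b ih =>
    rw [Function.iterate_succ_apply', ih, fwdDiff_const_smul, fwdDiff_single_prodDescPochhammer,
      smul_smul, Nat.descFactorial_succ]
    congr 2
    · simp [mul_comm]
    · funext j
      by_cases hj : j = i
      · subst hj; simp [Nat.sub_sub]
      · simp [hj]

end descPochhammer

section iterDeriv

variable {n q : ℕ}

lemma discDeriv_eq_fwdDiff (a : Fin n → ZMod q) (f : (Fin n → ZMod q) → ZMod q) :
    discDeriv a f = Δ_[a] f := rfl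

def iterDerivₗ (k : ℕ) (a : Fin k → Fin n → ZMod q) :
    Module.End (ZMod q) ((Fin n → ZMod q) → ZMod q) where
  toFun := iterDeriv k a
  map_add' f g := by
    induction k with
    | zero => rfl
    | succ k ih => simp only [iterDeriv, ih, discDeriv_eq_fwdDiff, fwdDiff_add]
  map_smul' c f := by
    induction k with
    | zero => rfl
    | succ k ih =>
      simp only [iterDeriv, ih, discDeriv_eq_fwdDiff, fwdDiff_const_smul, RingHom.id_apply]

@[simp]
lemma coe_iterDerivₗ (k : ℕ) (a : Fin k → Fin n → ZMod q) : ⇑(iterDerivₗ k a) = iterDeriv k a :=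
  rfl

lemma iterDeriv_snoc (k : ℕ) (a : Fin k → Fin n → ZMod q) (v : Fin n → ZMod q)
    (f : (Fin n → ZMod q) → ZMod q) :
    iterDeriv (k + 1) (Fin.snoc a v) f = Δ_[v] (iterDeriv k a f) := by
  simp [iterDeriv, discDeriv_eq_fwdDiff]

lemma iterDeriv_append (k m : ℕ) (a : Fin k → Fin n → ZMod q) (b : Fin m → Fin n → ZMod q)
    (f : (Fin n → ZMod q) → ZMod q) :
    iterDeriv (k + m) (Fin.append a b) f = iterDeriv m b (iterDeriv k a f) := by
  induction m with
  | zero => simp [Fin.append_right_nil a b rfl, iterDeriv]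
  | succ m ih =>
    rw [← Fin.snoc_init_self b, Fin.append_snoc, iterDeriv_snoc, ← ih]
    exact iterDeriv_snoc (k + m) _ _ f

lemma iterDeriv_const_eq_iterate (k : ℕ) (v : Fin n → ZMod q) (f : (Fin n → ZMod q) → ZMod q) :
    iterDeriv k (fun _ => v) f = (Δ_[v])^[k] f := by
  induction k with
  | zero => rfl
  | succ k ih => rw [Function.iterate_succ_apply', ← ih]; rfl

lemma iterDeriv_eq_zero_of_le {d : ℕ} {f : (Fin n → ZMod q) → ZMod q}
    (H : ∀ a : Fin (d + 1) → Fin n → ZMod q, iterDeriv (d + 1) a f = 0) {k : ℕ} (hk : d + 1 ≤ k)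
    (a : Fin k → Fin n → ZMod q) : iterDeriv k a f = 0 := by
  induction k, hk using Nat.le_induction with
  | base => exact H a
  | succ k _ ih => rw [iterDeriv, ih]; exact fwdDiff_const (a (Fin.last k)) (0 : ZMod q)

-- `s - t` truncates, harmlessly: the coefficient vanishes as soon as some `tᵢ > sᵢ`.
lemma exists_iterDeriv_prodDescPochhammer (t : Fin n →₀ ℕ) :
    ∃ (k : ℕ) (a : Fin k → Fin n → ZMod q), k = t.degree ∧ ∀ s : Fin n → ℕ,
      iterDeriv k a (prodDescPochhammer s) =
        (∏ i, ((s i).descFactorial (t i) : ZMod q)) • prodDescPochhammer (s - ⇑t) := by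
  induction t using Finsupp.induction_linear with
  | zero => exact ⟨0, Fin.elim0, by simp, fun s => by simp [iterDeriv]⟩
  | add t₁ t₂ ih₁ ih₂ =>
    obtain ⟨k₁, a₁, hk₁, ha₁⟩ := ih₁
    obtain ⟨k₂, a₂, hk₂, ha₂⟩ := ih₂
    refine ⟨k₁ + k₂, Fin.append a₁ a₂, by simp [hk₁, hk₂], fun s => ?_⟩
    rw [iterDeriv_append, ha₁, ← coe_iterDerivₗ, map_smul, coe_iterDerivₗ, ha₂, smul_smul,
      ← Finset.prod_mul_distrib, Finsupp.coe_add, tsub_add_eq_tsub_tsub]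
    congr 1
    refine Finset.prod_congr rfl fun i _ => ?_
    rw [Pi.add_apply, ← Nat.descFactorial_mul_descFactorial (Nat.le_add_right (t₁ i) (t₂ i))]
    simp [mul_comm]
  | single i b =>
    classical
    refine ⟨b, fun _ => Pi.single i 1, by simp, fun s => ?_⟩
    rw [iterDeriv_const_eq_iterate, fwdDiff_single_iterate_prodDescPochhammer,
      Finsupp.single_eq_pi_single]
    simp [Pi.single_apply, apply_ite]

end iterDeriv

section PrimeField

variable {n q : ℕ} [Fact q.Prime]

lemma iterDeriv_mem_degreeLEFunctions {m k : ℕ} (a : Fin k → Fin n → ZMod q)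
    {f : (Fin n → ZMod q) → ZMod q} (hf : f ∈ degreeLEFunctions (Fin n) (ZMod q) (m + k)) :
    iterDeriv k a f ∈ degreeLEFunctions (Fin n) (ZMod q) m := by
  induction k generalizing m with
  | zero => exact hf
  | succ k ih =>
    exact fwdDiff_mem_degreeLEFunctions _ (ih _ (by rwa [Nat.add_right_comm]))

lemma prod_factorial_val_ne_zero (u : Fin n → Fin q) :
    ∏ i, ((u i : ℕ).factorial : ZMod q) ≠ 0 := by
  refine Finset.prod_ne_zero_iff.mpr fun i _ => ?_
  rw [Ne, ZMod.natCast_eq_zero_iff, (Fact.out : q.Prime).dvd_factorial, not_le]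
  exact (u i).isLt

lemma coeff_eq_zero_of_iterDeriv_eq_zero (u : Fin n → Fin q) (c : (Fin n → Fin q) → ZMod q)
    (h : ∀ a : Fin (∑ i, (u i : ℕ)) → Fin n → ZMod q,
      iterDeriv _ a (∑ v, c v • prodDescPochhammer (Fin.val ∘ v)) = 0) :
    c u = 0 := by
  obtain ⟨k, a, hk, ha⟩ :=
    exists_iterDeriv_prodDescPochhammer (q := q) (Finsupp.equivFunOnFinite.symm (Fin.val ∘ u))
  simp only [Finsupp.degree_eq_sum, Finsupp.coe_equivFunOnFinite_symm, Function.comp_apply] at hk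
  subst hk
  have h0 := congrFun (h a) 0
  rw [← coe_iterDerivₗ, map_sum] at h0
  simp only [map_smul, coe_iterDerivₗ, ha, Finsupp.coe_equivFunOnFinite_symm, Finset.sum_apply,
    Pi.smul_apply, smul_eq_mul, descFactorial_mul_prodDescPochhammer_sub_zero] at h0
  have hval : ∀ v : Fin n → Fin q, Fin.val ∘ v = Fin.val ∘ u ↔ v = u := fun v =>
    Fin.val_injective.comp_left.eq_iff
  simp only [hval, mul_ite, mul_zero, Finset.sum_ite_eq', Finset.mem_univ, if_true,
    Function.comp_apply, Pi.zero_apply] at h0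
  exact (mul_eq_zero.mp h0).resolve_right (prod_factorial_val_ne_zero u)

lemma linearIndependent_prodDescPochhammer :
    LinearIndependent (ZMod q)
      (fun v : Fin n → Fin q => (prodDescPochhammer (Fin.val ∘ v) : (Fin n → ZMod q) → ZMod q)) :=
  Fintype.linearIndependent_iff.mpr fun c hc u =>
    coeff_eq_zero_of_iterDeriv_eq_zero u c fun a => by rw [hc, ← coe_iterDerivₗ, map_zero]

lemma span_prodDescPochhammer :
    Submodule.span (ZMod q) (Set.range fun v : Fin n → Fin q =>
      (prodDescPochhammer (Fin.val ∘ v) : (Fin n → ZMod q) → ZMod q)) = ⊤ :=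
  linearIndependent_prodDescPochhammer.span_eq_top_of_card_eq_finrank'
    (by simp [Module.finrank_fintype_fun_eq_card])

lemma mem_degreeLEFunctions_of_iterDeriv_eq_zero {d : ℕ} {f : (Fin n → ZMod q) → ZMod q}
    (H : ∀ a : Fin (d + 1) → Fin n → ZMod q, iterDeriv (d + 1) a f = 0) :
    f ∈ degreeLEFunctions (Fin n) (ZMod q) d := by
  have hf : f ∈ Submodule.span (ZMod q) _ :=
    span_prodDescPochhammer (q := q) (n := n) ▸ Submodule.mem_top
  obtain ⟨c, rfl⟩ := (Submodule.mem_span_range_iff_exists_fun (ZMod q)).mp hf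
  refine Submodule.sum_mem _ fun u _ => ?_
  by_cases hu : d < ∑ i, (u i : ℕ)
  · rw [coeff_eq_zero_of_iterDeriv_eq_zero u c (iterDeriv_eq_zero_of_le H hu), zero_smul]
    exact Submodule.zero_mem _
  · exact Submodule.smul_mem _ _ (degreeLEFunctions_mono (not_lt.mp hu)
      (prodDescPochhammer_mem_degreeLEFunctions _))

end PrimeField

theorem stmt0_general (q : ℕ) [Fact q.Prime] (n d : ℕ)
    (f : (Fin n → ZMod q) → ZMod q) :
    (∃ P : MvPolynomial (Fin n) (ZMod q), P.totalDegree ≤ d ∧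
        ∀ x, MvPolynomial.eval x P = f x) ↔
      ∀ (a : Fin (d + 1) → (Fin n → ZMod q)) (x : Fin n → ZMod q),
        iterDeriv (d + 1) a f x = 0 := by
  rw [← mem_degreeLEFunctions]
  refine ⟨fun hf a x => ?_,
    fun H => mem_degreeLEFunctions_of_iterDeriv_eq_zero fun a => funext (H a)⟩
  have hconst : iterDeriv d (fun i => a i.castSucc) f ∈ degreeLEFunctions (Fin n) (ZMod q) 0 :=
    iterDeriv_mem_degreeLEFunctions _ (by rwa [Nat.zero_add])
  exact congrFun (fwdDiff_eq_zero_of_mem_degreeLEFunctions_zero _ hconst) x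

/-- A function `f : F^n → F` over a prime field has global degree at most `d`
(is computed by a polynomial of total degree `≤ d`) iff all its iterated
derivatives of order `d + 1` vanish identically. -/
theorem stmt0 (q : ℕ) [Fact q.Prime] (n d : ℕ) (hd : d < q)
    (f : (Fin n → ZMod q) → ZMod q) :
    (∃ P : MvPolynomial (Fin n) (ZMod q), P.totalDegree ≤ d ∧
        ∀ x, MvPolynomial.eval x P = f x) ↔
      ∀ (a : Fin (d + 1) → (Fin n → ZMod q)) (x : Fin n → ZMod q),
        iterDeriv (d + 1) a f x = 0 :=
  stmt0_general q n d f
end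

section
/- Let g : A → B be a function between finite nonempty sets, ε > 0, and F ⊆ B^A a collection of functions. Then there exist c ≤ 1/ε² functions f₁,...,f_c ∈ F such that for every f ∈ F there is a function Γ_f : B^c → B with Pr_{x∈A}[Γ_f(f₁(x),...,f_c(x)) = f(x)] ≥ Pr_{x∈A}[g(x) = f(x)] − ε. -/
/-!
Energy increment. For a map `σ : A → V`, let `E[u | σ]` be the average of `u` over the fibres of
`σ`, and let the energy of `σ` be `∑_b ‖E[1_{g = b} | σ]‖²`, which lies in `[0, |A|]`.
Given `σ = (f₁, …, f_c)` and `h`, predict `h` by the majority value of `h` on each fibre of `σ`.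
If this loses more than `ε` against `g`, then by Cauchy–Schwarz and Pythagoras refining `σ`
by `h` raises the energy by at least `ε² |A|`; hence after at most `1/ε²` refinements every
`h ∈ F` is predicted well.
-/

open Finset

namespace LowComplexityApprox

variable {A V W B : Type*}

def fiberIndicator [DecidableEq B] (g : A → B) (b : B) (x : A) : ℝ := if g x = b then 1 else 0

lemma fiberIndicator_nonneg [DecidableEq B] (g : A → B) (b : B) : 0 ≤ fiberIndicator g b :=
  fun x => by unfold fiberIndicator; positivity

variable [Fintype A]

section FiberAvg

variable [DecidableEq V] [DecidableEq W]

noncomputable def fiberAvg (σ : A → V) (u : A → ℝ) (x : A) : ℝ :=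
  (∑ y with σ y = σ x, u y) / #{y | σ y = σ x}

lemma fiberAvg_congr (σ : A → V) (u : A → ℝ) {x x' : A} (h : σ x = σ x') :
    fiberAvg σ u x = fiberAvg σ u x' := by
  simp only [fiberAvg, h]

lemma card_fiber_ne_zero (σ : A → V) (x : A) : (#{y | σ y = σ x} : ℝ) ≠ 0 :=
  Nat.cast_ne_zero.2 (card_ne_zero.2 ⟨x, mem_filter.2 ⟨mem_univ x, rfl⟩⟩)

lemma fiberAvg_const (σ : A → V) (c : ℝ) (x : A) : fiberAvg σ (fun _ => c) x = c := by
  rw [fiberAvg, sum_const, nsmul_eq_mul, mul_div_cancel_left₀ _ (card_fiber_ne_zero σ x)]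

lemma fiberAvg_nonneg (σ : A → V) {u : A → ℝ} (hu : 0 ≤ u) (x : A) : 0 ≤ fiberAvg σ u x :=
  div_nonneg (sum_nonneg fun y _ => hu y) (Nat.cast_nonneg _)

lemma fiberAvg_const_mul (σ : A → V) (c : ℝ) (u : A → ℝ) (x : A) :
    fiberAvg σ (fun y => c * u y) x = c * fiberAvg σ u x := by
  simp only [fiberAvg, ← mul_sum, mul_div_assoc]

lemma sum_fiberAvg_finset_sum {ι : Type*} (s : Finset ι) (σ : A → V) (u : ι → A → ℝ) (x : A) :
    ∑ i ∈ s, fiberAvg σ (u i) x = fiberAvg σ (fun y => ∑ i ∈ s, u i y) x := by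
  simp only [fiberAvg, ← sum_div, sum_comm (s := s)]

/-- Double count pairs in a common fibre: a fibre of size `n` contributes `n` terms of weight
`1 / n`. -/
lemma sum_fiberAvg_self (σ : A → V) (F : A → A → ℝ) (hF : ∀ x y, σ x = σ y → F x = F y) :
    ∑ x, fiberAvg σ (F x) x = ∑ x, F x x := by
  calc ∑ x, fiberAvg σ (F x) x
      = ∑ x, ∑ y, if σ y = σ x then F x y / #{z | σ z = σ x} else 0 := by
        simp only [fiberAvg, sum_div, sum_filter, ite_div, zero_div]
    _ = ∑ y, ∑ x, if σ x = σ y then F y y / #{z | σ z = σ y} else 0 := by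
        rw [sum_comm]
        refine sum_congr rfl fun y _ => sum_congr rfl fun x _ => ?_
        by_cases hxy : σ x = σ y
        · simp only [hxy, hF x y hxy]
        · simp only [hxy, Ne.symm hxy, if_false]
    _ = ∑ y, F y y := by
        refine sum_congr rfl fun y _ => ?_
        rw [← sum_filter, sum_const, nsmul_eq_mul, mul_div_cancel₀ _ (card_fiber_ne_zero σ y)]

lemma sum_mul_fiberAvg (σ : A → V) (u w : A → ℝ) (hw : ∀ x y, σ x = σ y → w x = w y) :
    ∑ x, w x * fiberAvg σ u x = ∑ x, w x * u x := by
  simpa only [fiberAvg_const_mul] using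
    sum_fiberAvg_self σ (fun x y => w x * u y) fun x y hxy => by rw [hw x y hxy]

lemma sum_sq_fiberAvg_sub (σ : A → V) (τ : A → W) (hτσ : ∀ x y, τ x = τ y → σ x = σ y)
    (u : A → ℝ) :
    ∑ x, (fiberAvg τ u x - fiberAvg σ u x) ^ 2
      = ∑ x, fiberAvg τ u x ^ 2 - ∑ x, fiberAvg σ u x ^ 2 := by
  have hcross : ∑ x, fiberAvg σ u x * fiberAvg τ u x = ∑ x, fiberAvg σ u x * fiberAvg σ u x := by
    rw [sum_mul_fiberAvg τ u _ fun x y hxy => fiberAvg_congr σ u (hτσ x y hxy),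
      sum_mul_fiberAvg σ u _ fun x y hxy => fiberAvg_congr σ u hxy]
  have hexp : ∀ a b : ℝ, (a - b) ^ 2 = a ^ 2 - b ^ 2 + 2 * (b * b - b * a) := fun a b => by ring
  simp only [hexp, sum_add_distrib, sum_sub_distrib, ← mul_sum, hcross, sub_self, mul_zero,
    add_zero]

lemma natCast_card_eq_sum_fiberAvg [DecidableEq B] (g h : A → B) (τ : A → W)
    (hτh : ∀ x y, τ x = τ y → h x = h y) :
    (#{x | g x = h x} : ℝ) = ∑ x, fiberAvg τ (fiberIndicator g (h x)) x := by
  rw [sum_fiberAvg_self τ (fun x => fiberIndicator g (h x)) fun x y hxy => by rw [hτh x y hxy],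
    natCast_card_filter]
  rfl

end FiberAvg

section Energy

variable [DecidableEq V] [DecidableEq W] [Fintype B] [DecidableEq B]

lemma sum_fiberAvg_fiberIndicator (g : A → B) (σ : A → V) (x : A) :
    ∑ b, fiberAvg σ (fiberIndicator g b) x = 1 := by
  have hsum : (fun y => ∑ b, fiberIndicator g b y) = fun _ => 1 := by
    funext y; simp [fiberIndicator]
  rw [sum_fiberAvg_finset_sum, hsum, fiberAvg_const]

lemma fiberAvg_fiberIndicator_le_one (g : A → B) (σ : A → V) (b : B) (x : A) :
    fiberAvg σ (fiberIndicator g b) x ≤ 1 :=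
  sum_fiberAvg_fiberIndicator g σ x ▸
    single_le_sum (fun b _ => fiberAvg_nonneg σ (fiberIndicator_nonneg g b) x) (mem_univ b)

noncomputable def energy (g : A → B) (σ : A → V) : ℝ :=
  ∑ b, ∑ x, fiberAvg σ (fiberIndicator g b) x ^ 2

lemma energy_nonneg (g : A → B) (σ : A → V) : 0 ≤ energy g σ := by
  unfold energy; positivity

lemma energy_le_card (g : A → B) (σ : A → V) : energy g σ ≤ Fintype.card A :=
  calc energy g σ = ∑ x, ∑ b, fiberAvg σ (fiberIndicator g b) x ^ 2 := sum_comm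
    _ ≤ ∑ x, ∑ b, fiberAvg σ (fiberIndicator g b) x := by
        gcongr with x _ b _
        exact pow_le_of_le_one (fiberAvg_nonneg σ (fiberIndicator_nonneg g b) x)
          (fiberAvg_fiberIndicator_le_one g σ b x) two_ne_zero
    _ = Fintype.card A := by simp [sum_fiberAvg_fiberIndicator]

lemma energy_sub_energy (g : A → B) (σ : A → V) (τ : A → W)
    (hτσ : ∀ x y, τ x = τ y → σ x = σ y) :
    energy g τ - energy g σ = ∑ b, ∑ x,
      (fiberAvg τ (fiberIndicator g b) x - fiberAvg σ (fiberIndicator g b) x) ^ 2 := by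
  simp only [energy, ← sum_sub_distrib, sum_sq_fiberAvg_sub σ τ hτσ]

lemma exists_forall_fiberAvg_le [Nonempty B] (h : A → B) (σ : A → V) :
    ∃ Γ : V → B, ∀ x b,
      fiberAvg σ (fiberIndicator h b) x ≤ fiberAvg σ (fiberIndicator h (Γ (σ x))) x := by
  choose Γ hΓ using fun v : V =>
    Finite.exists_max fun b => ∑ y with σ y = v, fiberIndicator h b y
  exact ⟨Γ, fun x b => div_le_div_of_nonneg_right (hΓ _ b) (Nat.cast_nonneg _)⟩

lemma sum_fiberAvg_le_natCast_card (g h : A → B) (σ : A → V) (Γ : V → B)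
    (hΓ : ∀ x b,
      fiberAvg σ (fiberIndicator h b) x ≤ fiberAvg σ (fiberIndicator h (Γ (σ x))) x) :
    ∑ x, fiberAvg σ (fiberIndicator g (h x)) x ≤ #{x | Γ (σ x) = h x} := by
  set p := fun b => fiberAvg σ (fiberIndicator g b)
  set q := fun b => fiberAvg σ (fiberIndicator h b)
  calc ∑ x, p (h x) x = ∑ x, ∑ b, p b x * fiberIndicator h b x := by
        simp [fiberIndicator]
    _ = ∑ b, ∑ x, p b x * q b x := by
        rw [sum_comm]
        refine sum_congr rfl fun b _ => (sum_mul_fiberAvg σ _ _ fun x y hxy => ?_).symm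
        exact fiberAvg_congr σ _ hxy
    _ ≤ ∑ x, ∑ b, p b x * q (Γ (σ x)) x := by
        rw [sum_comm]
        gcongr with x _ b _
        · exact fiberAvg_nonneg σ (fiberIndicator_nonneg g b) x
        · exact hΓ x b
    _ = ∑ x, fiberIndicator h (Γ (σ x)) x := by
        simp only [p, q, ← sum_mul, sum_fiberAvg_fiberIndicator, one_mul]
        exact sum_fiberAvg_self σ _ fun x y hxy => by rw [hxy]
    _ = #{x | Γ (σ x) = h x} := by
        simp only [natCast_card_filter, fiberIndicator, eq_comm]

lemma sum_fiberAvg_sub_le_sqrt (g h : A → B) (σ : A → V) (τ : A → W)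
    (hτσ : ∀ x y, τ x = τ y → σ x = σ y) :
    ∑ x, (fiberAvg τ (fiberIndicator g (h x)) x - fiberAvg σ (fiberIndicator g (h x)) x)
      ≤ √(Fintype.card A * (energy g τ - energy g σ)) := by
  set d := fun x => fiberAvg τ (fiberIndicator g (h x)) x - fiberAvg σ (fiberIndicator g (h x)) x
  have hd : ∑ x, d x ^ 2 ≤ energy g τ - energy g σ := by
    rw [energy_sub_energy g σ τ hτσ, sum_comm]
    exact sum_le_sum fun x _ => single_le_sum (f := fun b =>
      (fiberAvg τ (fiberIndicator g b) x - fiberAvg σ (fiberIndicator g b) x) ^ 2)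
      (fun b _ => sq_nonneg _) (mem_univ (h x))
  calc ∑ x, d x ≤ |∑ x, d x| := le_abs_self _
    _ ≤ √(Fintype.card A * ∑ x, d x ^ 2) :=
        Real.abs_le_sqrt (by simpa using sq_sum_le_card_mul_sum_sq (s := univ) (f := d))
    _ ≤ √(Fintype.card A * (energy g τ - energy g σ)) := by gcongr

lemma exists_natCast_card_le_add_sqrt [Nonempty B] (g h : A → B) (σ : A → V) (τ : A → W)
    (hτσ : ∀ x y, τ x = τ y → σ x = σ y) (hτh : ∀ x y, τ x = τ y → h x = h y) :
    ∃ Γ : V → B, (#{x | g x = h x} : ℝ)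
      ≤ #{x | Γ (σ x) = h x} + √(Fintype.card A * (energy g τ - energy g σ)) := by
  obtain ⟨Γ, hΓ⟩ := exists_forall_fiberAvg_le h σ
  refine ⟨Γ, ?_⟩
  have hsqrt := sum_fiberAvg_sub_le_sqrt g h σ τ hτσ
  rw [sum_sub_distrib] at hsqrt
  rw [natCast_card_eq_sum_fiberAvg g h τ hτh]
  linarith [sum_fiberAvg_le_natCast_card g h σ Γ hΓ]

lemma energy_add_le [Nonempty B] {g h : A → B} {σ : A → V} {τ : A → W}
    (hτσ : ∀ x y, τ x = τ y → σ x = σ y) (hτh : ∀ x y, τ x = τ y → h x = h y)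
    {ε : ℝ} (hε : 0 ≤ ε)
    (hΓ : ∀ Γ : V → B, (#{x | Γ (σ x) = h x} : ℝ) < #{x | g x = h x} - ε * Fintype.card A) :
    energy g σ + ε ^ 2 * Fintype.card A ≤ energy g τ := by
  obtain ⟨Γ, hle⟩ := exists_natCast_card_le_add_sqrt g h σ τ hτσ hτh
  have hlt : ε * Fintype.card A < √(Fintype.card A * (energy g τ - energy g σ)) := by
    linarith [hΓ Γ]
  have := (Real.lt_sqrt (by positivity)).1 hlt
  nlinarith [(Nat.cast_nonneg (Fintype.card A) : (0 : ℝ) ≤ _)]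

end Energy

end LowComplexityApprox

open Finset LowComplexityApprox

/-- Low complexity approximation (Bhowmick–Lovett, Corollary 3.3): for any
`g : A → B`, `ε > 0` and any collection `F` of functions `A → B`, there are
`c ≤ 1/ε²` functions `f₁,…,f_c ∈ F` such that every `f ∈ F` admits
`Γ_f : B^c → B` with
`Pr_x[Γ_f(f₁(x),…,f_c(x)) = f(x)] ≥ Pr_x[g(x) = f(x)] − ε`. -/
theorem stmt5 {A B : Type*} [Fintype A] [Nonempty A] [Fintype B] [Nonempty B]
    [DecidableEq B] (g : A → B) (ε : ℝ) (hε : 0 < ε) (F : Set (A → B)) :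
    ∃ c : ℕ, (c : ℝ) ≤ 1 / ε ^ 2 ∧
      ∃ f : Fin c → (A → B), (∀ i, f i ∈ F) ∧
        ∀ h ∈ F, ∃ Γ : (Fin c → B) → B,
          ((Finset.univ.filter fun x : A => Γ (fun i => f i x) = h x).card : ℝ) /
              Fintype.card A ≥
            ((Finset.univ.filter fun x : A => g x = h x).card : ℝ) / Fintype.card A - ε := by
  classical
  have hA : (0 : ℝ) < Fintype.card A := Nat.cast_pos.2 Fintype.card_pos
  let P (c : ℕ) : Prop := ∃ f : Fin c → A → B, (∀ i, f i ∈ F) ∧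
    c * (ε ^ 2 * Fintype.card A) ≤ energy g fun x i => f i x
  have hP (c : ℕ) : P c → (c : ℝ) ≤ 1 / ε ^ 2 := by
    rintro ⟨f, -, hf⟩
    rw [le_div_iff₀ (by positivity)]
    nlinarith [energy_le_card g fun x i => f i x]
  set c := Nat.findGreatest P ⌊1 / ε ^ 2⌋₊
  obtain ⟨f, hfF, hf⟩ : P c := Nat.findGreatest_spec (Nat.zero_le _)
    ⟨Fin.elim0, fun i => i.elim0, by simpa using energy_nonneg g _⟩
  refine ⟨c, hP c ⟨f, hfF, hf⟩, f, hfF, fun h hh => ?_⟩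
  by_contra! hfail
  have hfail_card (Γ : (Fin c → B) → B) :
      (#{x | Γ (fun i => f i x) = h x} : ℝ) < #{x | g x = h x} - ε * Fintype.card A := by
    have := hfail Γ
    rwa [div_sub' hA.ne', div_lt_div_iff_of_pos_right hA, mul_comm] at this
  have hnext : P (c + 1) := by
    refine ⟨Fin.snoc f h, Fin.lastCases (by simpa using hh) fun j => by simpa using hfF j, ?_⟩
    have := energy_add_le (τ := fun x i => (Fin.snoc f h : Fin (c + 1) → A → B) i x)
      (fun x y hxy => funext fun i => by simpa using congrFun hxy i.castSucc)
      (fun x y hxy => by simpa using congrFun hxy (Fin.last c)) hε.le hfail_card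
    push_cast
    linarith
  exact Nat.findGreatest_is_greatest (Nat.lt_succ_self c) (Nat.le_floor (hP _ hnext)) hnext
end

section
/- Let F be a finite prime field, d < |F|, and n₁, n₂ ∈ ℕ. Let P be a polynomial of degree ≤ d on F^{n₁+n₂} and f : F^{n₁} → F a function, viewed as a function of the first n₁ variables. If Pr_{x ∈ F^{n₁+n₂}}[P(x) = f(x₁,...,x_{n₁})] > d/|F|, then P does not depend on the variables x_{n₁+1},...,x_{n₁+n₂}. -/
open Finset MvPolynomial

variable {F : Type*} [Field F] [Fintype F] [DecidableEq F]

/-- Root count for a nonzero univariate polynomial. -/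
lemma BL_count_roots_le (P : Polynomial F) (hP : P ≠ 0) :
    (Finset.univ.filter fun t : F => Polynomial.eval t P = 0).card ≤ P.natDegree := by
  calc (Finset.univ.filter fun t : F => Polynomial.eval t P = 0).card
      ≤ P.roots.toFinset.card := by
        apply Finset.card_le_card
        intro t ht
        simp only [Finset.mem_filter] at ht
        simp [Multiset.mem_toFinset, Polynomial.mem_roots', hP, Polynomial.IsRoot, ht.2]
    _ ≤ Multiset.card P.roots := Multiset.toFinset_card_le _
    _ ≤ P.natDegree := Polynomial.card_roots' P

/-- Slice a count over `F^{m+1}` into slices along the first coordinate. -/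
lemma BL_card_filter_succ {m : ℕ} (Pred : (Fin (m+1) → F) → Prop) [DecidablePred Pred] :
    (Finset.univ.filter Pred).card
      = ∑ s : Fin m → F, (Finset.univ.filter fun t : F => Pred (Fin.cons t s)).card := by
  rw [Finset.card_eq_sum_card_fiberwise
    (f := fun y : Fin (m+1) → F => Fin.tail y) (t := Finset.univ) (fun x _ => Finset.mem_univ _)]
  refine Finset.sum_congr rfl fun s _ => ?_
  refine Finset.card_bij' (fun y _ => y 0) (fun t _ => Fin.cons t s) ?_ ?_ ?_ ?_
  · intro y hy
    simp only [Finset.mem_filter, Finset.mem_univ, true_and] at hy ⊢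
    have : Fin.cons (y 0) s = y := by
      rw [← hy.2]; exact Fin.cons_self_tail y
    rw [this]; exact hy.1
  · intro t ht
    simp only [Finset.mem_filter, Finset.mem_univ, true_and] at ht ⊢
    exact ⟨ht, Fin.tail_cons _ _⟩
  · intro y hy
    simp only [Finset.mem_filter, Finset.mem_univ, true_and] at hy
    show Fin.cons (y 0) s = y
    rw [← hy.2]; exact Fin.cons_self_tail y
  · intro t ht
    simp

set_option linter.unusedSectionVars false

/-- Schwartz–Zippel: a nonzero polynomial in `n` variables of total degree `t`
has at most `t·q^{n-1}` zeros (stated multiplied through by `q`). -/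
lemma BL_schwartz_zippel : ∀ (n : ℕ) (p : MvPolynomial (Fin n) F), p ≠ 0 →
    (Finset.univ.filter fun x : Fin n → F => MvPolynomial.eval x p = 0).card * Fintype.card F
      ≤ p.totalDegree * (Fintype.card F) ^ n := by
  intro n
  induction n with
  | zero =>
    intro p hp
    obtain ⟨c, rfl⟩ := MvPolynomial.C_surjective (Fin 0) p
    have hc : c ≠ 0 := fun h => hp (by rw [h, map_zero])
    have : (Finset.univ.filter fun x : Fin 0 → F => MvPolynomial.eval x (MvPolynomial.C c) = 0) = ∅ := by
      apply Finset.filter_false_of_mem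
      intro x _
      simpa using hc
    simp [this, hc]
  | succ m ih =>
    intro p hp
    set q := Fintype.card F with hqdef
    set Q := MvPolynomial.finSuccEquiv F m p with hQdef
    have hQ : Q ≠ 0 := by
      rw [hQdef]
      exact (map_ne_zero_iff _ (AlgEquiv.injective (MvPolynomial.finSuccEquiv F m))).mpr hp
    set e := Q.natDegree with hedef
    set ce := Q.coeff e with hcedef
    have hce : ce ≠ 0 := by
      simpa [hcedef, hedef, Polynomial.coeff_natDegree] using Polynomial.leadingCoeff_ne_zero.mpr hQ
    have hdeg : ce.totalDegree + e ≤ p.totalDegree :=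
      MvPolynomial.totalDegree_coeff_finSuccEquiv_add_le p e hce
    -- slice
    rw [BL_card_filter_succ]
    -- bound each slice
    have hslice : ∀ s : Fin m → F,
        (Finset.univ.filter fun t : F => MvPolynomial.eval (Fin.cons t s) p = 0).card
          ≤ if MvPolynomial.eval s ce = 0 then q else e := by
      intro s
      by_cases hs : MvPolynomial.eval s ce = 0
      · simp only [hs, if_pos]
        simpa [hqdef] using Finset.card_filter_le Finset.univ _
      · simp only [hs, if_neg, if_false]
        have hmap : (Q.map (MvPolynomial.eval s)).coeff e = MvPolynomial.eval s ce := by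
          simp [Polynomial.coeff_map, hcedef]
        have hne : Q.map (MvPolynomial.eval s) ≠ 0 := fun h => hs (by rw [← hmap, h]; simp)
        have hnd : (Q.map (MvPolynomial.eval s)).natDegree ≤ e := Polynomial.natDegree_map_le
        calc (Finset.univ.filter fun t : F => MvPolynomial.eval (Fin.cons t s) p = 0).card
            = (Finset.univ.filter fun t : F =>
                Polynomial.eval t (Q.map (MvPolynomial.eval s)) = 0).card := by
              congr 1
              apply Finset.filter_congr
              intro t _
              rw [MvPolynomial.eval_eq_eval_mv_eval', hQdef]
          _ ≤ (Q.map (MvPolynomial.eval s)).natDegree := BL_count_roots_le _ hne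
          _ ≤ e := hnd
    set Z := (Finset.univ.filter fun s : Fin m → F => MvPolynomial.eval s ce = 0).card with hZdef
    have hZ : Z * q ≤ ce.totalDegree * q ^ m := ih ce hce
    have hsum : (∑ s : Fin m → F,
        (Finset.univ.filter fun t : F => MvPolynomial.eval (Fin.cons t s) p = 0).card)
          ≤ Z * q + q ^ m * e := by
      calc (∑ s : Fin m → F,
          (Finset.univ.filter fun t : F => MvPolynomial.eval (Fin.cons t s) p = 0).card)
          ≤ ∑ s : Fin m → F, (if MvPolynomial.eval s ce = 0 then q else e) :=
            Finset.sum_le_sum fun s _ => hslice s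
        _ = Z * q + (Finset.univ.filter fun s : Fin m → F => ¬ MvPolynomial.eval s ce = 0).card * e := by
            rw [Finset.sum_ite]
            simp [hZdef, mul_comm]
        _ ≤ Z * q + q ^ m * e := by
            have h1 : (Finset.univ.filter fun s : Fin m → F => ¬ MvPolynomial.eval s ce = 0).card
                ≤ q ^ m := by
              calc (Finset.univ.filter fun s : Fin m → F => ¬ MvPolynomial.eval s ce = 0).card
                  ≤ (Finset.univ : Finset (Fin m → F)).card := Finset.card_filter_le _ _
                _ = q ^ m := by simp [hqdef, Fintype.card_fun]
            have := Nat.mul_le_mul_right e h1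
            omega
    calc (∑ s : Fin m → F,
        (Finset.univ.filter fun t : F => MvPolynomial.eval (Fin.cons t s) p = 0).card) * q
        ≤ (Z * q + q ^ m * e) * q := by gcongr
      _ = Z * q * q + q ^ m * e * q := by ring
      _ ≤ ce.totalDegree * q ^ m * q + q ^ m * e * q := by gcongr
      _ = (ce.totalDegree + e) * (q ^ m * q) := by ring
      _ ≤ p.totalDegree * (q ^ m * q) := by gcongr
      _ = p.totalDegree * q ^ (m+1) := by rw [pow_succ]

/-- Main induction: if `p` agrees with a function `g` that is independent of the
coordinates in `T` on more than a `deg p / q` fraction of points, then the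
evaluation of `p` is also independent of the coordinates in `T`. -/
lemma BL_main : ∀ (k : ℕ) {n : ℕ} (T : Finset (Fin n)), T.card = k →
    ∀ (p : MvPolynomial (Fin n) F) (g : (Fin n → F) → F),
    (∀ x y : Fin n → F, (∀ i ∉ T, x i = y i) → g x = g y) →
    p.totalDegree * (Fintype.card F) ^ n
      < (Finset.univ.filter fun x : Fin n → F =>
          MvPolynomial.eval x p = g x).card * Fintype.card F →
    ∀ x y : Fin n → F, (∀ i ∉ T, x i = y i) →
      MvPolynomial.eval x p = MvPolynomial.eval y p := by
  intro k
  induction k with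
  | zero =>
    intro n T hT p g hg hcount x y hxy
    rw [Finset.card_eq_zero] at hT
    subst hT
    have : x = y := funext fun i => hxy i (Finset.notMem_empty i)
    rw [this]
  | succ k ih =>
    intro n T hT p g hg hcount x y hxy
    have hTne : T.Nonempty := Finset.card_pos.mp (by omega)
    obtain ⟨j, hj⟩ := hTne
    have hn : n ≠ 0 := by rintro rfl; exact j.elim0
    obtain ⟨m, rfl⟩ := Nat.exists_eq_succ_of_ne_zero hn
    set q := Fintype.card F with hqdef
    set σ : Equiv.Perm (Fin (m+1)) := Equiv.swap 0 j with hσdef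
    have hσσ : ∀ i, σ (σ i) = i := fun i => Equiv.swap_apply_self 0 j i
    have hσ0 : σ 0 = j := Equiv.swap_apply_left 0 j
    have hσj : σ j = 0 := Equiv.swap_apply_right 0 j
    set p' := MvPolynomial.rename σ p with hp'def
    set g' : (Fin (m+1) → F) → F := fun u => g (u ∘ σ) with hg'def
    have hcomp : ∀ u : Fin (m+1) → F, (u ∘ σ) ∘ σ = u := by
      intro u; funext i; simp [Function.comp, hσσ]
    have hevalp' : ∀ u : Fin (m+1) → F,
        MvPolynomial.eval u p' = MvPolynomial.eval (u ∘ σ) p := by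
      intro u
      rw [hp'def, MvPolynomial.eval_rename]
    have hevalp : ∀ u : Fin (m+1) → F,
        MvPolynomial.eval u p = MvPolynomial.eval (u ∘ σ) p' := by
      intro u
      rw [hevalp' (u ∘ σ), hcomp]
    have hgg' : ∀ u : Fin (m+1) → F, g' (u ∘ σ) = g u := by
      intro u
      rw [hg'def]
      simp only []
      rw [hcomp]
    set Q := MvPolynomial.finSuccEquiv F m p' with hQdef
    by_cases he : Q.natDegree = 0
    · -- p' is constant in the first coordinate, so p does not depend on `j`.
      have hconst : ∀ u : Fin (m+1) → F,
          MvPolynomial.eval u p' = MvPolynomial.eval (Fin.tail u) (Q.coeff 0) := by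
        intro u
        have h1 := MvPolynomial.eval_eq_eval_mv_eval' (Fin.tail u) (u 0) p'
        rw [Fin.cons_self_tail] at h1
        rw [h1, ← hQdef, Polynomial.eq_C_of_natDegree_eq_zero he]
        simp
      have hindepj : ∀ u v : Fin (m+1) → F, (∀ i, i ≠ j → u i = v i) →
          MvPolynomial.eval u p = MvPolynomial.eval v p := by
        intro u v huv
        rw [hevalp u, hevalp v, hconst (u ∘ σ), hconst (v ∘ σ)]
        have htail : Fin.tail (u ∘ σ) = Fin.tail (v ∘ σ) := by
          funext i
          show u (σ i.succ) = v (σ i.succ)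
          have hne : σ i.succ ≠ j := by
            intro h
            have : i.succ = σ j := by rw [← h, hσσ]
            rw [hσj] at this
            exact Fin.succ_ne_zero i this
          exact huv _ hne
        rw [htail]
      -- apply the induction hypothesis with `T.erase j`
      have hIH := ih (T.erase j) (by rw [Finset.card_erase_of_mem hj, hT]; rfl) p g
        (fun x y hxy => hg x y fun i hi => hxy i fun hmem => hi (Finset.mem_of_mem_erase hmem))
        hcount
      set y' := Function.update y j (x j) with hy'def
      have h1 : MvPolynomial.eval x p = MvPolynomial.eval y' p := by
        apply hIH
        intro i hi
        by_cases hij : i = j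
        · subst hij
          simp [hy'def]
        · have hiT : i ∉ T := fun hmem => hi (Finset.mem_erase.mpr ⟨hij, hmem⟩)
          rw [hy'def, Function.update_of_ne hij]
          exact hxy i hiT
      have h2 : MvPolynomial.eval y' p = MvPolynomial.eval y p := by
        apply hindepj
        intro i hij
        rw [hy'def, Function.update_of_ne hij]
      rw [h1, h2]
    · -- contradiction with the counting hypothesis
      exfalso
      have hQ : Q ≠ 0 := fun h => he (by rw [h, Polynomial.natDegree_zero])
      set e := Q.natDegree with hedef
      set ce := Q.coeff e with hcedef
      have hce : ce ≠ 0 := by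
        simpa [hcedef, hedef, Polynomial.coeff_natDegree] using
          Polynomial.leadingCoeff_ne_zero.mpr hQ
      have hdeg : ce.totalDegree + e ≤ p.totalDegree := by
        calc ce.totalDegree + e ≤ p'.totalDegree :=
              MvPolynomial.totalDegree_coeff_finSuccEquiv_add_le p' e hce
          _ ≤ p.totalDegree := MvPolynomial.totalDegree_rename_le σ p
      -- transfer the count to `p'` and `g'`
      set eσ : (Fin (m+1) → F) ≃ (Fin (m+1) → F) :=
        ⟨fun u => u ∘ σ, fun u => u ∘ σ, hcomp, hcomp⟩ with heσdef
      have hcard : (Finset.univ.filter fun x : Fin (m+1) → F =>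
            MvPolynomial.eval x p = g x).card
          = (Finset.univ.filter fun u : Fin (m+1) → F =>
            MvPolynomial.eval u p' = g' u).card := by
        apply Finset.card_equiv eσ
        intro u
        simp only [Finset.mem_filter, Finset.mem_univ, true_and, heσdef, Equiv.coe_fn_mk]
        rw [hevalp' (u ∘ σ), hcomp, hg'def]
        simp only []
        rw [hcomp]
      rw [hcard] at hcount
      -- g' is constant along the first coordinate
      have hgconst : ∀ (t : F) (s : Fin m → F),
          g' (Fin.cons t s) = g' (Fin.cons 0 s) := by
        intro t s
        rw [hg'def]
        simp only []
        apply hg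
        intro i hiT
        have hσi : σ i ≠ 0 := by
          intro h
          have : i = σ 0 := by rw [← h, hσσ]
          rw [hσ0] at this
          exact hiT (this ▸ hj)
        rcases Fin.eq_zero_or_eq_succ (σ i) with h | ⟨w, h⟩
        · exact absurd h hσi
        · simp [Function.comp, h, Fin.cons_succ]
      -- slice and bound
      have hA := BL_card_filter_succ (F := F)
        (fun u : Fin (m+1) → F => MvPolynomial.eval u p' = g' u)
      rw [hA] at hcount
      have hslice : ∀ s : Fin m → F,
          (Finset.univ.filter fun t : F =>
            MvPolynomial.eval (Fin.cons t s) p' = g' (Fin.cons t s)).card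
            ≤ if MvPolynomial.eval s ce = 0 then q else e := by
        intro s
        by_cases hs : MvPolynomial.eval s ce = 0
        · simp only [hs, if_pos]
          simpa [hqdef] using Finset.card_filter_le Finset.univ _
        · simp only [hs, if_neg, if_false]
          set G := g' (Fin.cons 0 s) with hGdef
          set P₁ := Q.map (MvPolynomial.eval s) - Polynomial.C G with hP₁def
          have hcoeff : P₁.coeff e = MvPolynomial.eval s ce := by
            rw [hP₁def, Polynomial.coeff_sub, Polynomial.coeff_map,
              Polynomial.coeff_C, if_neg he]
            simp [hcedef]
          have hP₁ : P₁ ≠ 0 := fun h => hs (by rw [← hcoeff, h]; simp)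
          have hnd : P₁.natDegree ≤ e := by
            calc P₁.natDegree ≤ max (Q.map (MvPolynomial.eval s)).natDegree
                  (Polynomial.C G).natDegree := Polynomial.natDegree_sub_le _ _
              _ ≤ e := by
                  simp only [Polynomial.natDegree_C, max_le_iff]
                  exact ⟨Polynomial.natDegree_map_le, Nat.zero_le e⟩
          calc (Finset.univ.filter fun t : F =>
                MvPolynomial.eval (Fin.cons t s) p' = g' (Fin.cons t s)).card
              = (Finset.univ.filter fun t : F => Polynomial.eval t P₁ = 0).card := by
                congr 1
                apply Finset.filter_congr
                intro t _
                rw [MvPolynomial.eval_eq_eval_mv_eval', ← hQdef, hgconst t s, ← hGdef,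
                  hP₁def]
                simp [sub_eq_zero]
            _ ≤ P₁.natDegree := BL_count_roots_le _ hP₁
            _ ≤ e := hnd
      set Z := (Finset.univ.filter fun s : Fin m → F =>
        MvPolynomial.eval s ce = 0).card with hZdef
      have hZ : Z * q ≤ ce.totalDegree * q ^ m := BL_schwartz_zippel m ce hce
      have hsum : (∑ s : Fin m → F,
          (Finset.univ.filter fun t : F =>
            MvPolynomial.eval (Fin.cons t s) p' = g' (Fin.cons t s)).card)
            ≤ Z * q + q ^ m * e := by
        calc (∑ s : Fin m → F,
            (Finset.univ.filter fun t : F =>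
              MvPolynomial.eval (Fin.cons t s) p' = g' (Fin.cons t s)).card)
            ≤ ∑ s : Fin m → F, (if MvPolynomial.eval s ce = 0 then q else e) :=
              Finset.sum_le_sum fun s _ => hslice s
          _ = Z * q + (Finset.univ.filter fun s : Fin m → F =>
              ¬ MvPolynomial.eval s ce = 0).card * e := by
              rw [Finset.sum_ite]
              simp [hZdef, mul_comm]
          _ ≤ Z * q + q ^ m * e := by
              have h1 : (Finset.univ.filter fun s : Fin m → F =>
                  ¬ MvPolynomial.eval s ce = 0).card ≤ q ^ m := by
                calc (Finset.univ.filter fun s : Fin m → F =>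
                    ¬ MvPolynomial.eval s ce = 0).card
                    ≤ (Finset.univ : Finset (Fin m → F)).card := Finset.card_filter_le _ _
                  _ = q ^ m := by simp [hqdef, Fintype.card_fun]
              have := Nat.mul_le_mul_right e h1
              omega
      have hfinal : (∑ s : Fin m → F,
          (Finset.univ.filter fun t : F =>
            MvPolynomial.eval (Fin.cons t s) p' = g' (Fin.cons t s)).card) * q
            ≤ p.totalDegree * q ^ (m+1) := by
        calc (∑ s : Fin m → F,
            (Finset.univ.filter fun t : F =>
              MvPolynomial.eval (Fin.cons t s) p' = g' (Fin.cons t s)).card) * q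
            ≤ (Z * q + q ^ m * e) * q := by gcongr
          _ = Z * q * q + q ^ m * e * q := by ring
          _ ≤ ce.totalDegree * q ^ m * q + q ^ m * e * q := by gcongr
          _ = (ce.totalDegree + e) * (q ^ m * q) := by ring
          _ ≤ p.totalDegree * (q ^ m * q) := by gcongr
          _ = p.totalDegree * q ^ (m+1) := by rw [pow_succ]
      simp only [Nat.succ_eq_add_one] at hcount
      omega

/-- Schwartz–Zippel variant (Bhowmick–Lovett, Claim 4.2): if a degree-`≤ d`
polynomial `P` on `F^{n₁+n₂}` agrees with a function `f` of the first `n₁`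
variables on more than a `d/|F|` fraction of points, then `P` does not depend on
the last `n₂` variables. -/
theorem stmt6 (q n₁ n₂ d : ℕ) [Fact q.Prime] (hd : d < q)
    (P : MvPolynomial (Fin (n₁ + n₂)) (ZMod q)) (hP : P.totalDegree ≤ d)
    (f : (Fin n₁ → ZMod q) → ZMod q)
    (hagree : ((Finset.univ.filter fun x : Fin (n₁ + n₂) → ZMod q =>
        MvPolynomial.eval x P = f (fun i => x (Fin.castAdd n₂ i))).card : ℝ) /
        Fintype.card (Fin (n₁ + n₂) → ZMod q) > (d : ℝ) / q) :
    ∀ x y : Fin (n₁ + n₂) → ZMod q,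
      (∀ i : Fin n₁, x (Fin.castAdd n₂ i) = y (Fin.castAdd n₂ i)) →
      MvPolynomial.eval x P = MvPolynomial.eval y P := by
  intro x y hxy
  have hqprime : q.Prime := Fact.out
  have hqpos : 0 < q := hqprime.pos
  have hcardF : Fintype.card (ZMod q) = q := ZMod.card q
  have hcardfun : Fintype.card (Fin (n₁ + n₂) → ZMod q) = q ^ (n₁ + n₂) := by
    rw [Fintype.card_fun, hcardF, Fintype.card_fin]
  set g : (Fin (n₁ + n₂) → ZMod q) → ZMod q :=
    fun x => f (fun i => x (Fin.castAdd n₂ i)) with hgdef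
  set A := (Finset.univ.filter fun x : Fin (n₁ + n₂) → ZMod q =>
    MvPolynomial.eval x P = g x).card with hAdef
  -- convert the real inequality to a natural-number inequality
  have hnat : d * q ^ (n₁ + n₂) < A * q := by
    have hqR : (0:ℝ) < (q:ℝ) := by exact_mod_cast hqpos
    have hqNR : (0:ℝ) < (q:ℝ) ^ (n₁ + n₂) := pow_pos hqR _
    rw [gt_iff_lt, hcardfun] at hagree
    have h1 : (d:ℝ) / q < (A:ℝ) / (q:ℝ) ^ (n₁ + n₂) := by
      convert hagree using 2
      push_cast
      ring
    rw [div_lt_div_iff₀ hqR hqNR] at h1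
    exact_mod_cast h1
  -- the set of "last" variables
  set T : Finset (Fin (n₁ + n₂)) :=
    Finset.univ.filter (fun i : Fin (n₁ + n₂) => ∀ j : Fin n₁, Fin.castAdd n₂ j ≠ i) with hTdef
  have hg : ∀ u v : Fin (n₁ + n₂) → ZMod q, (∀ i ∉ T, u i = v i) → g u = g v := by
    intro u v huv
    rw [hgdef]
    simp only []
    congr 1
    funext i
    apply huv
    intro hmem
    rw [hTdef] at hmem
    simp only [Finset.mem_filter, Finset.mem_univ, true_and] at hmem
    exact hmem i rfl
  have hcount : P.totalDegree * (Fintype.card (ZMod q)) ^ (n₁ + n₂)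
      < (Finset.univ.filter fun x : Fin (n₁ + n₂) → ZMod q =>
          MvPolynomial.eval x P = g x).card * Fintype.card (ZMod q) := by
    rw [hcardF, ← hAdef]
    calc P.totalDegree * q ^ (n₁ + n₂) ≤ d * q ^ (n₁ + n₂) := by gcongr
      _ < A * q := hnat
  exact BL_main T.card T rfl P g hg hcount x y
    (fun i hi => by
      rw [hTdef] at hi
      simp only [Finset.mem_filter, Finset.mem_univ, true_and, not_forall, not_not] at hi
      obtain ⟨j, hj⟩ := hi
      rw [← hj]
      exact hxy j)
end

section
/- Let F be a finite field and P : F^n → F a polynomial of degree d. If rank(P) ≥ 2r+1, then the Schmidt rank of P is at least r. Here rank(P) is the minimal number m such that P is a function of m polynomials of degree ≤ d−1, and the Schmidt rank of P is the Schmidt rank of its degree-d homogeneous part h(P), namely the minimal s such that h(P) = ∑_{i=1}^{s} Q_i·R_i with deg Q_i, deg R_i < d. -/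
/-!
Write `P = h(P) + (P - h(P))`. The lower part `P - h(P)` has degree `< d`, so a decomposition
`h(P) = ∑_{i<s} Aᵢ Bᵢ` with `deg Aᵢ, deg Bᵢ < d` exhibits `P` as the function
`v ↦ ∑ i, v aᵢ * v bᵢ + v c` of the `2s + 1` polynomials `A, B, P - h(P)`, all of degree `≤ d - 1`.
Hence `2r + 1 ≤ 2s + 1`.
-/

open MvPolynomial

namespace MvPolynomial

theorem totalDegree_sub_homogeneousComponent_le {σ R : Type*} [CommRing R]
    {P : MvPolynomial σ R} {d : ℕ} (hP : P.totalDegree ≤ d) :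
    (P - homogeneousComponent d P).totalDegree ≤ d - 1 := by
  refine Finset.sup_le fun m hm => ?_
  rw [mem_support_iff, coeff_sub, coeff_homogeneousComponent] at hm
  by_cases hm_deg : m.degree = d
  · simp [hm_deg] at hm
  · rw [if_neg hm_deg, sub_zero] at hm
    have hm_le : m.degree ≤ d := (le_totalDegree (mem_support_iff.mpr hm)).trans hP
    change m.degree ≤ d - 1
    omega

end MvPolynomial

def sumMulAdd {R : Type*} [CommSemiring R] (s : ℕ) (v : Fin (s + s + 1) → R) : R :=
  ∑ i, v (Fin.castAdd 1 (Fin.castAdd s i)) * v (Fin.castAdd 1 (Fin.natAdd s i)) +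
    v (Fin.natAdd (s + s) 0)

theorem eval_sum_mul_add_eq_sumMulAdd {σ R : Type*} [CommSemiring R] {s : ℕ}
    (A B : Fin s → MvPolynomial σ R) (C : MvPolynomial σ R) (x : σ → R) :
    eval x (∑ i, A i * B i + C) =
      sumMulAdd s fun j => eval x (Fin.append (Fin.append A B) ![C] j) := by
  simp only [sumMulAdd, Fin.append_left, Fin.append_right, Matrix.cons_val_zero, map_add,
    map_sum, map_mul]

theorem stmt7_general {F : Type*} [Field F] (n d r : ℕ)
    (P : MvPolynomial (Fin n) F) (hPd : P.totalDegree = d)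
    (hrank : ∀ (m : ℕ) (Q : Fin m → MvPolynomial (Fin n) F) (Γ : (Fin m → F) → F),
      (∀ i, (Q i).totalDegree ≤ d - 1) →
      (∀ x, eval x P = Γ fun i => eval x (Q i)) → 2 * r + 1 ≤ m) :
    ∀ (s : ℕ) (A B : Fin s → MvPolynomial (Fin n) F),
      (∀ i, (A i).totalDegree < d ∧ (B i).totalDegree < d) →
      homogeneousComponent d P = ∑ i, A i * B i → r ≤ s := by
  intro s A B hAB hsum
  set C := P - homogeneousComponent d P
  have hC : C.totalDegree ≤ d - 1 := totalDegree_sub_homogeneousComponent_le hPd.le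
  have hP : P = ∑ i, A i * B i + C := by rw [← hsum]; ring
  have hQ : ∀ j, (Fin.append (Fin.append A B) ![C] j).totalDegree ≤ d - 1 := by
    intro j
    induction j using Fin.addCases with
    | left j =>
      induction j using Fin.addCases with
      | left i => simpa only [Fin.append_left] using Nat.le_sub_one_of_lt (hAB i).1
      | right i =>
        simpa only [Fin.append_left, Fin.append_right] using Nat.le_sub_one_of_lt (hAB i).2
    | right _ => simpa only [Fin.append_right, Fin.fin_one_eq_zero, Matrix.cons_val_zero] using hC
  have h2s := hrank _ _ (sumMulAdd s) hQ fun x => hP ▸ eval_sum_mul_add_eq_sumMulAdd A B C x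
  omega

/-- If a degree-`d` polynomial `P` has rank at least `2r+1` (every way of computing
`P` as a function of polynomials of degree `≤ d−1` uses at least `2r+1` of them),
then the Schmidt rank of `P` — the minimal `s` with
`h(P) = ∑_{i<s} Qᵢ·Rᵢ`, `deg Qᵢ, deg Rᵢ < d`, where `h(P)` is the degree-`d`
homogeneous part — is at least `r`. -/
theorem stmt7 {F : Type*} [Field F] [Fintype F] (n d r : ℕ) (hd : 2 ≤ d)
    (P : MvPolynomial (Fin n) F) (hPd : P.totalDegree = d)
    (hrank : ∀ (m : ℕ) (Q : Fin m → MvPolynomial (Fin n) F) (Γ : (Fin m → F) → F),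
      (∀ i, (Q i).totalDegree ≤ d - 1) →
      (∀ x, eval x P = Γ fun i => eval x (Q i)) → 2 * r + 1 ≤ m) :
    ∀ (s : ℕ) (A B : Fin s → MvPolynomial (Fin n) F),
      (∀ i, (A i).totalDegree < d ∧ (B i).totalDegree < d) →
      homogeneousComponent d P = ∑ i, A i * B i → r ≤ s :=
  stmt7_general n d r P hPd hrank
end

section
/- Let F be a finite field and let P and R₁,...,R_k : F^n → F be polynomials, X = Z(R₁,...,R_k) their common zero set. If the X-relative rank of P is at least 2r+2, then the relative Schmidt rank of P with respect to (R₁,...,R_k) is at least r. Here relrank_X(P) := min{ rank(P − T) : T polynomial of degree ≤ deg(P) vanishing on X }, and the relative Schmidt rank of P is min{ SchmidtRank(h(P) + ∑ g_i·h(R_i)) : deg(g_i) + deg(R_i) ≤ deg(P) }, where h(·) denotes the top-degree homogeneous part. -/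
open MvPolynomial

lemma aux_sub_top_lt {σ : Type*} {R : Type*} [CommRing R] (φ : MvPolynomial σ R)
    {D : ℕ} (hle : φ.totalDegree ≤ D) (h : 0 < D) :
    (φ - homogeneousComponent φ.totalDegree φ).totalDegree < D := by
  rw [MvPolynomial.totalDegree]
  rw [Finset.sup_lt_iff (by exact h)]
  intro d hd
  rw [MvPolynomial.mem_support_iff, MvPolynomial.coeff_sub,
    coeff_homogeneousComponent] at hd
  by_cases hdeg : d.degree = φ.totalDegree
  · simp [hdeg] at hd
  · have hc : coeff d φ ≠ 0 := by
      intro h0; simp [h0] at hd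
    have hmem : d ∈ φ.support := MvPolynomial.mem_support_iff.mpr hc
    have h1 : (d.sum fun _ e => e) ≤ φ.totalDegree := le_totalDegree hmem
    have h2 : d.degree = d.sum fun _ e => e := rfl
    rcases lt_or_eq_of_le (h1.trans hle) with h3 | h3
    · exact h3
    · exact absurd (le_antisymm hle (h3 ▸ h1) ▸ h2.symm.trans h3) hdeg

lemma aux_eq_top_of_deg_zero {σ : Type*} {R : Type*} [CommRing R]
    (φ : MvPolynomial σ R) (h : φ.totalDegree = 0) :
    homogeneousComponent φ.totalDegree φ = φ := by
  have := homogeneousComponent_of_mem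
    ((mem_homogeneousSubmodule 0 φ).mpr (isHomogeneous_of_totalDegree_zero (σ := σ) h)) (m := 0)
  rw [h]
  simpa using this

/-- Relative version: let `X = Z(R₁,…,R_k)`. If the `X`-relative rank of `P` is at
least `2r+2` (for every polynomial `T` of degree `≤ deg P` vanishing on `X`, any
computation of `P − T` from polynomials of degree `< deg P` uses at least `2r+2`
of them), then the relative Schmidt rank of `P` w.r.t. `(R₁,…,R_k)` is at least
`r`: whenever `h(P) + ∑ gᵢ·h(Rᵢ)` (with `deg gᵢ + deg Rᵢ ≤ deg P`, or `gᵢ = 0`)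
is a sum of `s` products of pairs of polynomials of degree `< deg P`, we have
`s ≥ r`. -/
theorem stmt8 {F : Type*} [Field F] [Fintype F] (n k r : ℕ)
    (P : MvPolynomial (Fin n) F) (R : Fin k → MvPolynomial (Fin n) F)
    (hrel : ∀ T : MvPolynomial (Fin n) F, T.totalDegree ≤ P.totalDegree →
      (∀ x : Fin n → F, (∀ i, eval x (R i) = 0) → eval x T = 0) →
      ∀ (m : ℕ) (Q : Fin m → MvPolynomial (Fin n) F) (Γ : (Fin m → F) → F),
        (∀ i, (Q i).totalDegree < P.totalDegree) →
        (∀ x, eval x (P - T) = Γ fun i => eval x (Q i)) → 2 * r + 2 ≤ m) :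
    ∀ g : Fin k → MvPolynomial (Fin n) F,
      (∀ i, g i = 0 ∨ (g i).totalDegree + (R i).totalDegree ≤ P.totalDegree) →
      ∀ (s : ℕ) (A B : Fin s → MvPolynomial (Fin n) F),
        (∀ i, (A i).totalDegree < P.totalDegree ∧ (B i).totalDegree < P.totalDegree) →
        homogeneousComponent P.totalDegree P +
            ∑ i, g i * homogeneousComponent (R i).totalDegree (R i) = ∑ i, A i * B i →
        r ≤ s := by
  intro g hg s A B hAB heq
  set D := P.totalDegree with hD
  set T : MvPolynomial (Fin n) F := -∑ i, g i * R i with hT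
  have hgR : ∀ i, (g i * R i).totalDegree ≤ D := by
    intro i
    rcases hg i with h | h
    · simp [h]
    · exact (totalDegree_mul _ _).trans h
  have hTdeg : T.totalDegree ≤ D := by
    rw [hT, totalDegree_neg]
    exact totalDegree_finsetSum_le fun i _ => hgR i
  have hTvan : ∀ x : Fin n → F, (∀ i, eval x (R i) = 0) → eval x T = 0 := by
    intro x hx
    simp [hT, hx]
  -- rewrite the sum ∑ gᵢ Rᵢ
  have hsplit : ∑ i, g i * R i =
      ∑ i, g i * homogeneousComponent (R i).totalDegree (R i) +
        ∑ i, g i * (R i - homogeneousComponent (R i).totalDegree (R i)) := by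
    rw [← Finset.sum_add_distrib]
    exact Finset.sum_congr rfl fun i _ => by ring
  by_cases hD0 : D = 0
  · -- degenerate case: P - T = 0
    rcases Nat.eq_zero_or_pos s with hs | hs
    · subst hs
      have hR : ∀ i, g i * homogeneousComponent (R i).totalDegree (R i) = g i * R i := by
        intro i
        rcases hg i with h | h
        · simp [h]
        · rw [aux_eq_top_of_deg_zero (R i) (by omega)]
      have hP : homogeneousComponent P.totalDegree P = P :=
        aux_eq_top_of_deg_zero P hD0
      have hzero : P - T = 0 := by
        rw [hT, sub_neg_eq_add, ← hP, ← Finset.sum_congr rfl fun i _ => hR i]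
        simpa using heq
      have := hrel T hTdeg hTvan 0 (fun i => i.elim0) (fun _ => 0)
        (fun i => i.elim0) (fun x => by simp [hzero])
      omega
    · have := (hAB ⟨0, hs⟩).1
      omega
  · have hDpos : 0 < D := Nat.pos_of_ne_zero hD0
    set L : MvPolynomial (Fin n) F :=
      (P - homogeneousComponent P.totalDegree P) +
        ∑ i, g i * (R i - homogeneousComponent (R i).totalDegree (R i)) with hL
    have hLdeg : L.totalDegree < D := by
      rw [hL]
      apply lt_of_le_of_lt (totalDegree_add _ _)
      rw [max_lt_iff]
      constructor
      · exact aux_sub_top_lt P le_rfl hDpos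
      · apply lt_of_le_of_lt (totalDegree_finset_sum _ _)
        rw [Finset.sup_lt_iff (by exact hDpos)]
        intro i _
        rcases hg i with h | h
        · simpa [h] using hDpos
        · rcases Nat.eq_zero_or_pos (R i).totalDegree with h0 | h0
          · rw [aux_eq_top_of_deg_zero (R i) h0]
            simpa using hDpos
          · calc (g i * (R i - homogeneousComponent (R i).totalDegree (R i))).totalDegree
                ≤ (g i).totalDegree +
                  (R i - homogeneousComponent (R i).totalDegree (R i)).totalDegree :=
                  totalDegree_mul _ _
              _ < (g i).totalDegree + (R i).totalDegree := by
                  have := aux_sub_top_lt (R i) le_rfl h0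
                  omega
              _ ≤ D := h
    have hPT : P - T = ∑ i, A i * B i + L := by
      rw [hT, sub_neg_eq_add, ← heq, hL, hsplit]
      ring
    set Q : Fin (s + s + 1) → MvPolynomial (Fin n) F :=
      Fin.snoc (Fin.append A B) L with hQ
    have hQdeg : ∀ i, (Q i).totalDegree < D := by
      intro i
      refine Fin.lastCases ?_ (fun j => ?_) i
      · simp only [hQ, Fin.snoc_last]
        exact hLdeg
      · simp only [hQ, Fin.snoc_castSucc]
        refine Fin.addCases (fun j => ?_) (fun j => ?_) j
        · rw [Fin.append_left]; exact (hAB j).1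
        · rw [Fin.append_right]; exact (hAB j).2
    set Γ : (Fin (s + s + 1) → F) → F := fun v =>
      (∑ i : Fin s, v (Fin.castSucc (Fin.castAdd s i)) * v (Fin.castSucc (Fin.natAdd s i)))
        + v (Fin.last (s + s)) with hΓ
    have heval : ∀ x, eval x (P - T) = Γ fun i => eval x (Q i) := by
      intro x
      rw [hPT]
      simp only [hΓ, hQ, Fin.snoc_castSucc, Fin.snoc_last, Fin.append_left, Fin.append_right,
        map_add, map_sum, map_mul]
    have := hrel T hTdeg hTvan (s + s + 1) Q Γ hQdeg heval
    omega
end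

section
/- Let P₁,...,P_c : F^n → F be polynomials of degree at most d and suppose the factor rank of the collection (P₁,...,P_c) is at least 2r+1 with r ≥ 1, where the factor rank is min over nonzero λ ∈ F^c of the d*-rank of ∑λᵢPᵢ with d* = max_i deg(λᵢPᵢ). Then the Schmidt rank of the collection, defined as min over nonzero λ of SchmidtRank(∑ λᵢ h(Pᵢ)) where h is the top-degree homogeneous part, is at least r. -/
open MvPolynomial

/-! Let `T = ∑ λⱼPⱼ` and let `H` be the top-degree form of `∑ λⱼ h(Pⱼ)`. Then `T - H` has degree
below `d*`, so a Schmidt decomposition `H = ∑ᵢ AᵢBᵢ` with `s` summands computes `T` as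
`(T - H) + ∑ᵢ AᵢBᵢ` from the `2s + 1` polynomials `T - H, Aᵢ, Bᵢ` of degree `< d*`; hence
`2r + 1 ≤ 2s + 1`. When `d* = 0`, `T` is a constant, computed from no polynomials at all. -/

namespace MvPolynomial

variable {σ R : Type*} [CommRing R]

theorem totalDegree_C_mul_of_ne_zero [IsDomain R] {a : R} (ha : a ≠ 0)
    (p : MvPolynomial σ R) : (C a * p).totalDegree = p.totalDegree := by
  rw [C_mul', totalDegree, support_smul_eq ha, ← totalDegree]

theorem totalDegree_sub_homogeneousComponent_totalDegree_lt
    {p : MvPolynomial σ R} {d : ℕ} (hd : 0 < d) (hp : p.totalDegree ≤ d) :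
    (p - homogeneousComponent p.totalDegree p).totalDegree < d := by
  have hlower : p - homogeneousComponent p.totalDegree p =
      ∑ i ∈ Finset.range p.totalDegree, homogeneousComponent i p := by
    rw [sub_eq_iff_eq_add, ← Finset.sum_range_succ, sum_homogeneousComponent]
  rw [hlower]
  refine lt_of_le_of_lt (totalDegree_finsetSum_le fun i hi => ?_) (Nat.sub_lt hd one_pos)
  have := Finset.mem_range.1 hi
  exact (homogeneousComponent_isHomogeneous i p).totalDegree_le.trans (by omega)

theorem exists_eval_eq_of_eq_add_sum_mul {s e : ℕ} {T L : MvPolynomial σ R}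
    {A B : Fin s → MvPolynomial σ R} (hT : T = L + ∑ i, A i * B i)
    (hL : L.totalDegree < e) (hA : ∀ i, (A i).totalDegree < e)
    (hB : ∀ i, (B i).totalDegree < e) :
    ∃ (Q : Fin (s + s + 1) → MvPolynomial σ R) (Γ : (Fin (s + s + 1) → R) → R),
      (∀ i, (Q i).totalDegree < e) ∧ ∀ x, eval x T = Γ fun i => eval x (Q i) := by
  refine ⟨Fin.cons L (Fin.append A B),
    fun y => y 0 + ∑ i, y (Fin.castAdd s i).succ * y (Fin.natAdd s i).succ, ?_, ?_⟩
  · refine Fin.cases hL fun i => ?_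
    refine Fin.addCases (fun i => ?_) (fun i => ?_) i
    · simpa only [Fin.cons_succ, Fin.append_left] using hA i
    · simpa only [Fin.cons_succ, Fin.append_right] using hB i
  · intro x
    simp only [hT, map_add, map_sum, map_mul, Fin.cons_zero, Fin.cons_succ, Fin.append_left,
      Fin.append_right]

section LinearCombination

variable {ι : Type*} [Fintype ι] (lam : ι → R) (P : ι → MvPolynomial σ R)

theorem totalDegree_sum_C_mul_le_sup :
    (∑ j, C (lam j) * P j).totalDegree ≤
      Finset.univ.sup fun j => (C (lam j) * P j).totalDegree :=
  totalDegree_finsetSum_le fun j _ =>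
    Finset.le_sup (f := fun j => (C (lam j) * P j).totalDegree) (Finset.mem_univ j)

variable [IsDomain R]

theorem totalDegree_le_sup_C_mul {j : ι} (hj : lam j ≠ 0) :
    (P j).totalDegree ≤ Finset.univ.sup fun j => (C (lam j) * P j).totalDegree := by
  rw [← totalDegree_C_mul_of_ne_zero hj]
  exact Finset.le_sup (f := fun j => (C (lam j) * P j).totalDegree) (Finset.mem_univ j)

theorem totalDegree_sum_C_mul_homogeneousComponent_le_sup :
    (∑ j, C (lam j) * homogeneousComponent (P j).totalDegree (P j)).totalDegree ≤
      Finset.univ.sup fun j => (C (lam j) * P j).totalDegree := by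
  refine totalDegree_finsetSum_le fun j _ => ?_
  by_cases hj : lam j = 0
  · simp [hj]
  rw [totalDegree_C_mul_of_ne_zero hj]
  exact (homogeneousComponent_isHomogeneous _ _).totalDegree_le.trans
    (totalDegree_le_sup_C_mul lam P hj)

/-- Each `Pⱼ` differs from `h(Pⱼ)` below its degree, and `∑ λⱼ h(Pⱼ)` from its own top form. -/
theorem totalDegree_sum_C_mul_sub_homogeneousComponent_lt
    (hpos : 0 < Finset.univ.sup fun j => (C (lam j) * P j).totalDegree) :
    (∑ j, C (lam j) * P j -
      homogeneousComponent
        (∑ j, C (lam j) * homogeneousComponent (P j).totalDegree (P j)).totalDegree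
        (∑ j, C (lam j) * homogeneousComponent (P j).totalDegree (P j))).totalDegree <
      Finset.univ.sup fun j => (C (lam j) * P j).totalDegree := by
  set S := ∑ j, C (lam j) * homogeneousComponent (P j).totalDegree (P j)
  have hsplit : ∑ j, C (lam j) * P j - homogeneousComponent S.totalDegree S =
      ∑ j, C (lam j) * (P j - homogeneousComponent (P j).totalDegree (P j)) +
        (S - homogeneousComponent S.totalDegree S) := by
    simp only [S, mul_sub, Finset.sum_sub_distrib]
    abel
  rw [hsplit]
  refine (totalDegree_add _ _).trans_lt (max_lt ?_ ?_)
  · refine (totalDegree_finsetSum _ _).trans_lt ((Finset.sup_lt_iff hpos).2 fun j _ => ?_)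
    by_cases hj : lam j = 0
    · simpa [hj] using hpos
    rw [totalDegree_C_mul_of_ne_zero hj]
    exact totalDegree_sub_homogeneousComponent_totalDegree_lt hpos
      (totalDegree_le_sup_C_mul lam P hj)
  · exact totalDegree_sub_homogeneousComponent_totalDegree_lt hpos
      (totalDegree_sum_C_mul_homogeneousComponent_le_sup lam P)

end LinearCombination

end MvPolynomial

theorem stmt10_general {F : Type*} [Field F] (n c r : ℕ)
    (P : Fin c → MvPolynomial (Fin n) F)
    (hfrank : ∀ lam : Fin c → F, lam ≠ 0 →
      ∀ (m : ℕ) (Q : Fin m → MvPolynomial (Fin n) F) (Γ : (Fin m → F) → F),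
        (∀ i, (Q i).totalDegree <
          Finset.univ.sup fun j => (C (lam j) * P j).totalDegree) →
        (∀ x, eval x (∑ i, C (lam i) * P i) = Γ fun i => eval x (Q i)) →
        2 * r + 1 ≤ m) :
    ∀ lam : Fin c → F, lam ≠ 0 →
      ∀ (s : ℕ) (A B : Fin s → MvPolynomial (Fin n) F),
        (∀ i, (A i).totalDegree <
            (∑ j, C (lam j) * homogeneousComponent (P j).totalDegree (P j)).totalDegree ∧
          (B i).totalDegree <
            (∑ j, C (lam j) * homogeneousComponent (P j).totalDegree (P j)).totalDegree) →
        homogeneousComponent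
            (∑ j, C (lam j) * homogeneousComponent (P j).totalDegree (P j)).totalDegree
            (∑ j, C (lam j) * homogeneousComponent (P j).totalDegree (P j)) =
          ∑ i, A i * B i →
        r ≤ s := by
  intro lam hlam s A B hAB hdecomp
  set T := ∑ j, C (lam j) * P j
  set S := ∑ j, C (lam j) * homogeneousComponent (P j).totalDegree (P j)
  set dstar := Finset.univ.sup fun j => (C (lam j) * P j).totalDegree
  obtain hzero | hpos := Nat.eq_zero_or_pos dstar
  · have hTC : T = C (coeff 0 T) := totalDegree_eq_zero_iff_eq_C.1 <|
      Nat.le_zero.1 (hzero ▸ totalDegree_sum_C_mul_le_sup lam P)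
    have := hfrank lam hlam 0 Fin.elim0 (fun _ => coeff 0 T) (fun i => i.elim0)
      fun x => (congrArg (eval x) hTC).trans (eval_C _)
    omega
  · have hS := totalDegree_sum_C_mul_homogeneousComponent_le_sup lam P
    have hT : T = (T - homogeneousComponent S.totalDegree S) + ∑ i, A i * B i := by
      rw [← hdecomp, sub_add_cancel]
    obtain ⟨Q, Γ, hQ, hΓ⟩ := exists_eval_eq_of_eq_add_sum_mul hT
      (totalDegree_sum_C_mul_sub_homogeneousComponent_lt lam P hpos)
      (fun i => (hAB i).1.trans_le hS) (fun i => (hAB i).2.trans_le hS)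
    have := hfrank lam hlam _ Q Γ hQ hΓ
    omega

/-- If the factor rank of a collection `(P₁,…,P_c)` of degree-`≤ d` polynomials is
at least `2r+1` (with `r ≥ 1`) — i.e. for every nonzero `λ`, any computation of
`∑ λᵢPᵢ` from polynomials of degree `< d*` (where `d* = max_i deg(λᵢPᵢ)`) uses at
least `2r+1` of them — then the Schmidt rank of the collection is at least `r`:
for every nonzero `λ`, any Schmidt decomposition of `∑ λᵢ·h(Pᵢ)` (into products of
pairs of polynomials of degree strictly below its total degree) has at least `r`
summands. -/
theorem stmt10 {F : Type*} [Field F] [Fintype F] (n c d r : ℕ) (hr : 1 ≤ r)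
    (P : Fin c → MvPolynomial (Fin n) F) (hPd : ∀ i, (P i).totalDegree ≤ d)
    (hfrank : ∀ lam : Fin c → F, lam ≠ 0 →
      ∀ (m : ℕ) (Q : Fin m → MvPolynomial (Fin n) F) (Γ : (Fin m → F) → F),
        (∀ i, (Q i).totalDegree <
          Finset.univ.sup fun j => (C (lam j) * P j).totalDegree) →
        (∀ x, eval x (∑ i, C (lam i) * P i) = Γ fun i => eval x (Q i)) →
        2 * r + 1 ≤ m) :
    ∀ lam : Fin c → F, lam ≠ 0 →
      ∀ (s : ℕ) (A B : Fin s → MvPolynomial (Fin n) F),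
        (∀ i, (A i).totalDegree <
            (∑ j, C (lam j) * homogeneousComponent (P j).totalDegree (P j)).totalDegree ∧
          (B i).totalDegree <
            (∑ j, C (lam j) * homogeneousComponent (P j).totalDegree (P j)).totalDegree) →
        homogeneousComponent
            (∑ j, C (lam j) * homogeneousComponent (P j).totalDegree (P j)).totalDegree
            (∑ j, C (lam j) * homogeneousComponent (P j).totalDegree (P j)) =
          ∑ i, A i * B i →
        r ≤ s :=
  stmt10_general n c r P hfrank
end
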